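/- Let X be a compact, locally connected, metrizable topological space and let G be a countable group acting by homeomorphisms on X such that the orbit space X/G is Hausdorff. Then there exists a G-invariant metric on X inducing the topology of X. -/

import Mathlib

/-!
Orbits are closed because the orbit space is Hausdorff. An infinite orbit would have an
accumulation point in itself, hence by homogeneity be a countable perfect set, which cannot exist
in a compact metric space; so all orbits are finite. Separate the points `p` of the orbit of `x`
by small pairwise disjoint open sets `N p`, and let `C` be the connected component of `x` in a
`G`-invariant open neighbourhood of `x` inside `⋃ p, N p` (compactness makes the saturation of a
closed set closed). Each `g • C` is connected, contains `g • x` and stays inside `⋃ p, N p`, so it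
lies in `N (g • x)`: the action is equicontinuous. Then `ρ a b = ⨆ g, d (g • a) (g • b)` is an
invariant metric inducing the topology.
-/

open Set Filter Topology MulAction Pointwise

theorem IsClosed.exists_not_accPt_of_countable {X : Type*} [MetricSpace X] [CompleteSpace X]
    {C : Set X} (hC : IsClosed C) (hne : C.Nonempty) (hct : C.Countable) :
    ∃ x ∈ C, ¬AccPt x (𝓟 C) := by
  by_contra! hpre
  obtain ⟨f, hfC, -, hf⟩ := Perfect.exists_nat_bool_injection ⟨hC, hpre⟩ hne
  have : Countable (ℕ → Bool) := countable_univ_iff.1 <|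
    (mapsTo_univ_iff.2 fun b => hfC (mem_range_self b)).countable_of_injOn hf.injOn hct
  rw [← Cardinal.mk_le_aleph0_iff] at this
  simp only [Cardinal.mk_pi, Cardinal.mk_fintype, Fintype.card_bool, Nat.cast_ofNat,
    Cardinal.prod_const, Cardinal.lift_id, Cardinal.mk_eq_aleph0, Cardinal.two_power_aleph0] at this
  exact Cardinal.aleph0_lt_continuum.not_ge this

theorem IsPreconnected.subset_of_pairwiseDisjoint {X ι : Type*} [TopologicalSpace X]
    {s : Set X} {S : Set ι} {U : ι → Set X} (hs : IsPreconnected s) (hU : ∀ i, IsOpen (U i))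
    (hdisj : S.PairwiseDisjoint U) (hsU : s ⊆ ⋃ i ∈ S, U i) {i : ι} (hi : i ∈ S)
    (hsi : (s ∩ U i).Nonempty) : s ⊆ U i := by
  refine hs.subset_left_of_subset_union (v := ⋃ j ∈ S \ {i}, U j) (hU i)
    (isOpen_biUnion fun j _ => hU j) ?_ ?_ hsi
  · exact disjoint_iUnion₂_right.2 fun j hj => hdisj hi hj.1 (Ne.symm hj.2)
  · refine hsU.trans <| iUnion₂_subset fun j hj => ?_
    rcases eq_or_ne j i with rfl | hji
    · exact subset_union_left
    · exact subset_union_right.trans' (subset_biUnion_of_mem (u := U) ⟨hj, hji⟩)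

theorem AccPt.smul {G X : Type*} [Group G] [MulAction G X] [TopologicalSpace X]
    [ContinuousConstSMul G X] {z : X} {S : Set X} (hz : AccPt z (𝓟 S)) (g : G) :
    AccPt (g • z) (𝓟 (g • S)) := by
  simpa only [map_principal, image_smul] using
    hz.map (continuous_const_smul g).continuousAt (MulAction.injective g)

section OrbitSpace

variable {G X : Type*} [Group G] [MulAction G X] [TopologicalSpace X]
  [T2Space (Quotient (orbitRel G X))]

theorem MulAction.isClosed_orbit (x : X) : IsClosed (orbit G x) := by
  have : orbit G x = Quotient.mk (orbitRel G X) ⁻¹' {Quotient.mk _ x} := by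
    ext y
    exact (Quotient.eq.trans orbitRel_apply).symm
  exact this ▸ isClosed_singleton.preimage continuous_quotient_mk'

theorem MulAction.exists_isOpen_smul_invariant_subset [CompactSpace X] {W : Set X}
    (hW : IsOpen W) {x : X} (hxW : orbit G x ⊆ W) :
    ∃ V : Set X, IsOpen V ∧ x ∈ V ∧ V ⊆ W ∧ ∀ (g : G), ∀ y ∈ V, g • y ∈ V := by
  set q := Quotient.mk (orbitRel G X)
  have hq : ∀ (g : G) (y : X), q (g • y) = q y := fun g y =>
    Quotient.sound (mem_orbit y g)
  refine ⟨q ⁻¹' (q '' Wᶜ)ᶜ, ?_, ?_, ?_, ?_⟩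
  · exact (hW.isClosed_compl.isCompact.image continuous_quotient_mk').isClosed.isOpen_compl
      |>.preimage continuous_quotient_mk'
  · rintro ⟨y, hyW, hyx⟩
    exact hyW (hxW (orbitRel_apply.1 (Quotient.exact hyx)))
  · intro y hy
    by_contra hyW
    exact hy ⟨y, hyW, rfl⟩
  · intro g y hy
    simpa only [mem_preimage, hq] using hy

end OrbitSpace

theorem MulAction.finite_orbit {G X : Type*} [Group G] [Countable G] [MetricSpace X]
    [CompactSpace X] [MulAction G X] [ContinuousConstSMul G X]
    [T2Space (Quotient (orbitRel G X))] (x : X) : (orbit G x).Finite := by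
  by_contra hinf
  obtain ⟨z, -, hz⟩ := Set.Infinite.exists_accPt_of_subset_isCompact hinf isCompact_univ
    (subset_univ _)
  obtain ⟨g, rfl⟩ : z ∈ orbit G x :=
    (isClosed_orbit (G := G) x).closure_subset hz.clusterPt.mem_closure
  obtain ⟨_, ⟨h, rfl⟩, hnacc⟩ := (isClosed_orbit (G := G) x).exists_not_accPt_of_countable
    ⟨x, mem_orbit_self x⟩ (countable_range _)
  refine hnacc ?_
  simpa only [smul_smul, inv_mul_cancel_right, smul_orbit] using hz.smul (h * g⁻¹)

theorem MulAction.equicontinuousAt_smul_of_finite_orbit {G X : Type*} [Group G] [MulAction G X]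
    [UniformSpace X] [T2Space X] [CompactSpace X] [LocallyConnectedSpace X]
    [ContinuousConstSMul G X] [T2Space (Quotient (orbitRel G X))] {x : X}
    (hx : (orbit G x).Finite) : EquicontinuousAt (fun (g : G) (y : X) => g • y) x := by
  intro U hU
  obtain ⟨O, hO, hOdisj⟩ := hx.t2_separation
  set N : X → Set X := fun p => O p ∩ interior (UniformSpace.ball p U)
  have hNopen : ∀ p, IsOpen (N p) := fun p => (hO p).2.inter isOpen_interior
  have hmemN : ∀ p, p ∈ N p := fun p =>
    ⟨(hO p).1, mem_interior_iff_mem_nhds.2 (UniformSpace.ball_mem_nhds p hU)⟩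
  obtain ⟨V, hVopen, hxV, hVN, hVinv⟩ := exists_isOpen_smul_invariant_subset (G := G)
    (isOpen_biUnion fun p _ => hNopen p) fun p hp => mem_biUnion hp (hmemN p)
  set C := connectedComponentIn V x
  filter_upwards [hVopen.connectedComponentIn.mem_nhds (mem_connectedComponentIn hxV)]
    with a ha g
  have hgC : (g • ·) '' C ⊆ N (g • x) := by
    refine (isPreconnected_connectedComponentIn.image _ (continuous_const_smul g).continuousOn
      ).subset_of_pairwiseDisjoint hNopen (hOdisj.mono fun p => inter_subset_left) ?_
      (mem_orbit x g) ⟨g • x, ⟨x, mem_connectedComponentIn hxV, rfl⟩, hmemN _⟩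
    rintro _ ⟨y, hy, rfl⟩
    exact hVN (hVinv g y (connectedComponentIn_subset V x hy))
  exact (interior_subset (hgC ⟨a, ha, rfl⟩).2 : g • a ∈ UniformSpace.ball (g • x) U)

section OrbitSupDist

variable (G : Type*) {X : Type*} [Group G] [MulAction G X] [PseudoMetricSpace X]

noncomputable def orbitSupDist (a b : X) : ℝ :=
  ⨆ g : G, dist (g • a) (g • b)

variable {G}

theorem orbitSupDist_smul (h : G) (a b : X) :
    orbitSupDist G (h • a) (h • b) = orbitSupDist G a b := by
  simp only [orbitSupDist, smul_smul]
  exact (Equiv.mulRight h).surjective.iSup_comp fun g => dist (g • a) (g • b)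

theorem orbitSupDist_comm (a b : X) : orbitSupDist G a b = orbitSupDist G b a := by
  simp only [orbitSupDist, dist_comm]

theorem orbitSupDist_le {a b : X} {M : ℝ} (h : ∀ g : G, dist (g • a) (g • b) ≤ M) :
    orbitSupDist G a b ≤ M :=
  ciSup_le h

variable [BoundedSpace X]

theorem dist_smul_le_orbitSupDist (g : G) (a b : X) :
    dist (g • a) (g • b) ≤ orbitSupDist G a b :=
  le_ciSup (f := fun g : G => dist (g • a) (g • b))
    ⟨Metric.diam (univ : Set X), forall_mem_range.2 fun _ =>
      Metric.dist_le_diam_of_mem (Bornology.IsBounded.all _) (mem_univ _) (mem_univ _)⟩ g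

theorem dist_le_orbitSupDist (a b : X) : dist a b ≤ orbitSupDist G a b := by
  simpa only [one_smul] using dist_smul_le_orbitSupDist (1 : G) a b

theorem orbitSupDist_nonneg (a b : X) : 0 ≤ orbitSupDist G a b :=
  dist_nonneg.trans (dist_le_orbitSupDist a b)

theorem orbitSupDist_triangle (a b c : X) :
    orbitSupDist G a c ≤ orbitSupDist G a b + orbitSupDist G b c :=
  orbitSupDist_le fun g => (dist_triangle _ (g • b) _).trans <|
    add_le_add (dist_smul_le_orbitSupDist g a b) (dist_smul_le_orbitSupDist g b c)

theorem nhds_basis_orbitSupDist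
    (hequi : ∀ x : X, EquicontinuousAt (fun (g : G) (y : X) => g • y) x) (a : X) :
    (𝓝 a).HasBasis (fun ε : ℝ => 0 < ε) fun ε => {b | orbitSupDist G a b < ε} := by
  refine Metric.nhds_basis_ball.to_hasBasis (fun ε hε => ⟨ε, hε, fun b hb => ?_⟩) fun ε hε => ?_
  · rw [Metric.mem_ball, dist_comm]
    exact (dist_le_orbitSupDist a b).trans_lt hb
  · refine Metric.mem_nhds_iff.1 ?_
    filter_upwards [Metric.equicontinuousAt_iff_right.1 (hequi a) (ε / 2) (half_pos hε)]
      with b hb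
    exact (orbitSupDist_le fun g => (hb g).le).trans_lt (half_lt_self hε)

end OrbitSupDist

theorem orbitSupDist_eq_zero {G X : Type*} [Group G] [MulAction G X] [MetricSpace X]
    [BoundedSpace X] {a b : X} : orbitSupDist G a b = 0 ↔ a = b := by
  refine ⟨fun h => dist_le_zero.1 (h ▸ dist_le_orbitSupDist a b), ?_⟩
  rintro rfl
  exact (orbitSupDist_le fun g => (dist_self _).le).antisymm (orbitSupDist_nonneg a a)
/-- A compact, locally connected, metrizable space with an action of a countable group
whose orbit space is Hausdorff admits an invariant metric inducing its topology. -/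
theorem stmt16 {G X : Type*} [Group G] [Countable G] [TopologicalSpace X]
    [CompactSpace X] [LocallyConnectedSpace X] [TopologicalSpace.MetrizableSpace X]
    [MulAction G X] [ContinuousConstSMul G X]
    [T2Space (Quotient (MulAction.orbitRel G X))] :
    ∃ ρ : X → X → ℝ,
      (∀ a b : X, 0 ≤ ρ a b) ∧
      (∀ a b : X, ρ a b = 0 ↔ a = b) ∧
      (∀ a b : X, ρ a b = ρ b a) ∧
      (∀ a b c : X, ρ a c ≤ ρ a b + ρ b c) ∧
      (∀ (g : G) (a b : X), ρ (g • a) (g • b) = ρ a b) ∧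
      (∀ s : Set X, IsOpen s ↔ ∀ a ∈ s, ∃ ε > 0, {b : X | ρ a b < ε} ⊆ s) := by
  let := TopologicalSpace.metrizableSpaceMetric X
  have hequi (x : X) : EquicontinuousAt (fun (g : G) (y : X) => g • y) x :=
    equicontinuousAt_smul_of_finite_orbit (finite_orbit x)
  refine ⟨orbitSupDist G, orbitSupDist_nonneg, fun a b => orbitSupDist_eq_zero,
    orbitSupDist_comm, orbitSupDist_triangle, orbitSupDist_smul, fun s => ?_⟩
  simp only [isOpen_iff_mem_nhds, (nhds_basis_orbitSupDist hequi _).mem_iff]
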